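/- Product formula for single-column interpolation ASEP polynomials: Let μ ∈ {0,1}ⁿ be a composition with all parts 0 or 1, and let S_μ = {i : μᵢ = 1}. If F ∈ K[x₁,…,xₙ] satisfies the defining conditions of the interpolation ASEP polynomial F*_μ, then F = ∏_{i ∈ S_μ} ( xᵢ − t^{#(S_μᶜ ∩ {1,…,i−1})} / t^{n−1} ), where S_μᶜ is the complement of S_μ in {1,…,n}. -/

import Mathlib

open MvPolynomial

noncomputable section

/-- `k = ℚ(t)`, the field of rational functions in `t` over `ℚ`. -/
abbrev kk : Type := RatFunc ℚ

/-- `K = k(q)`, the field of rational functions in `q` over `k`. -/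
abbrev KK : Type := RatFunc kk

/-- The element `t` of `k`. -/
def tk : kk := RatFunc.X

/-- The element `t` of `K`. -/
def tK : KK := RatFunc.C tk

/-- The element `q` of `K`. -/
def qK : KK := RatFunc.X

/-- `kᵢ(μ) = #{j < i : μⱼ > μᵢ} + #{j > i : μⱼ ≥ μᵢ}`. -/
def kStat {n : ℕ} (μ : Fin n → ℕ) (i : Fin n) : ℕ :=
  (Finset.univ.filter (fun j => j < i ∧ μ i < μ j)).card +
    (Finset.univ.filter (fun j => i < j ∧ μ i ≤ μ j)).card

/-- `μ̄ = (q^{μ₁} t^{−k₁(μ)}, …, q^{μₙ} t^{−kₙ(μ)}) ∈ Kⁿ`. -/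
def mubar {n : ℕ} (μ : Fin n → ℕ) : Fin n → KK :=
  fun i => qK ^ (μ i) * tK ^ (-(kStat μ i : ℤ))

/-- `|μ| = μ₁ + ⋯ + μₙ`. -/
def wt {n : ℕ} (μ : Fin n → ℕ) : ℕ := ∑ i, μ i

/-- A partition: a weakly decreasing composition. -/
def IsPartition {n : ℕ} (μ : Fin n → ℕ) : Prop := ∀ i j : Fin n, i ≤ j → μ j ≤ μ i

/-- The exponent vector of the monomial `x^μ`. -/
def toMono {n : ℕ} (μ : Fin n → ℕ) : Fin n →₀ ℕ := Finsupp.equivFunOnFinite.symm μ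

/-- `Sₙ(λ)`: the set of compositions obtained by permuting the entries of `λ`. -/
def permSet {n : ℕ} (lam : Fin n → ℕ) : Finset (Fin n → ℕ) :=
  Finset.image (fun σ : Equiv.Perm (Fin n) => lam ∘ σ) Finset.univ

/-- The defining conditions of the interpolation Macdonald polynomial `P*_λ`. -/
def IsIntMacdonald {n : ℕ} (lam : Fin n → ℕ) (P : MvPolynomial (Fin n) KK) : Prop :=
  P.IsSymmetric ∧ P.totalDegree ≤ wt lam ∧ P.coeff (toMono lam) = 1 ∧
    ∀ ν : Fin n → ℕ, IsPartition ν → ν ≠ lam → wt ν ≤ wt lam →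
      MvPolynomial.eval (mubar ν) P = 0

/-- The defining conditions of the interpolation ASEP polynomial `F*_μ`,
with respect to the partition `λ` (the decreasing rearrangement of `μ`). -/
def IsIntASEP {n : ℕ} (lam μ : Fin n → ℕ) (F : MvPolynomial (Fin n) KK) : Prop :=
  F.totalDegree ≤ wt lam ∧
    (∀ τ ∈ permSet lam, F.coeff (toMono τ) = if τ = μ then 1 else 0) ∧
    ∀ ν : Fin n → ℕ, wt ν ≤ wt lam → ν ∉ permSet lam →
      MvPolynomial.eval (mubar ν) F = 0

/-- The defining conditions of the nonsymmetric interpolation Macdonald polynomial `E*_μ`. -/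
def IsIntE {n : ℕ} (μ : Fin n → ℕ) (E : MvPolynomial (Fin n) KK) : Prop :=
  E.totalDegree ≤ wt μ ∧ E.coeff (toMono μ) = 1 ∧
    ∀ ν : Fin n → ℕ, ν ≠ μ → wt ν ≤ wt μ → MvPolynomial.eval (mubar ν) E = 0

/-- Evaluation of a rational function in `q` at `q = 1` (junk value if not regular there). -/
def atOne (c : KK) : kk := RatFunc.eval (RingHom.id kk) 1 c

/-- `P` is regular at `q = 1`: the reduced denominator of each coefficient does not
vanish at `q = 1`. -/
def RegAtOne {n : ℕ} (P : MvPolynomial (Fin n) KK) : Prop :=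
  ∀ m : Fin n →₀ ℕ, Polynomial.eval (1 : kk) (P.coeff m).denom ≠ 0

/-- Coefficient-wise evaluation of `P` at `q = 1`. -/
def evalq1 {n : ℕ} (P : MvPolynomial (Fin n) KK) : MvPolynomial (Fin n) kk :=
  ∑ m ∈ P.support, monomial m (atOne (P.coeff m))

/-- The interpolation elementary polynomial `e*_{m,ℓ}(x₁,…,xₙ;t)`, with coefficients in `k`. -/
def estar (n m : ℕ) (ℓ : ℤ) : MvPolynomial (Fin n) kk :=
  ∑ S ∈ Finset.powersetCard m (Finset.univ : Finset (Fin n)),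
    ∏ i ∈ S, (X i - C (tk ^ (((Sᶜ.filter (fun j => j < i)).card : ℤ) - ℓ)))

/-- The interpolation elementary polynomial `e*_{m,ℓ}(x₁,…,xₙ;t)`, with coefficients in `K`. -/
def estarK (n m : ℕ) (ℓ : ℤ) : MvPolynomial (Fin n) KK :=
  ∑ S ∈ Finset.powersetCard m (Finset.univ : Finset (Fin n)),
    ∏ i ∈ S, (X i - C (tK ^ (((Sᶜ.filter (fun j => j < i)).card : ℤ) - ℓ)))

/-- The conjugate partition: `λ′ᵢ = #{j : λⱼ ≥ i}`. -/
def conjP {n : ℕ} (lam : Fin n → ℕ) (i : ℕ) : ℕ :=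
  (Finset.univ.filter (fun j => i ≤ lam j)).card

/-!
Write `G` for the product. `F` and `G` obey the same degree bound and have the same coefficients on
the monomials `x^τ`, `τ ∈ Sₙ(λ)`. `G` also vanishes at every `ν̄` with `|ν| ≤ #S` and `ν ∉ Sₙ(λ)`:
the support `A` of such a `ν` has fewer than `#S` elements, so a discrete intermediate value
argument gives `i ∈ S \ A` with `#(S ∩ [1, i)) = #(A ∩ [1, i))`, and then `νᵢ = 0` and `ν̄ᵢ` is the
root of the `i`-th factor. Hence `F - G` vanishes at `d̄` for every exponent `d` of its support,
which forces `F = G`: the matrix `(d̄^e)_{d,e}` has entries `(unit) • q^⟨d,e⟩`, and the coefficient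
of `q^(∑ ⟨d,d⟩)` in its determinant comes from the diagonal alone, because
`∑_d ⟨σ d, d⟩ < ∑_d ⟨d, d⟩` for every permutation `σ ≠ 1`.
-/

open Finset

lemma Finset.card_filter_lt_succ (X : Finset ℕ) (y : ℕ) :
    #{j ∈ X | j < y + 1} = #{j ∈ X | j < y} + if y ∈ X then 1 else 0 := by
  simp only [Nat.lt_succ_iff_lt_or_eq, filter_or]
  split_ifs with hy
  · rw [card_union_of_disjoint (disjoint_filter.2 fun _ _ h => h.ne), filter_eq' X y, if_pos hy,
      card_singleton]
  · rw [filter_eq' X y, if_neg hy, union_empty, add_zero]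

lemma Finset.exists_mem_sdiff_card_filter_lt_eq {S A : Finset ℕ} (h : #A < #S) :
    ∃ i ∈ S \ A, #{j ∈ S | j < i} = #{j ∈ A | j < i} := by
  have hex : ∃ x, #{j ∈ A | j < x} < #{j ∈ S | j < x} := by
    obtain ⟨N, hN⟩ := (S ∪ A).exists_nat_subset_range
    refine ⟨N, ?_⟩
    rwa [filter_true_of_mem fun j hj => mem_range.1 (hN (mem_union_right S hj)),
      filter_true_of_mem fun j hj => mem_range.1 (hN (mem_union_left A hj))]
  obtain ⟨y, hy⟩ : ∃ y, Nat.find hex = y + 1 :=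
    Nat.exists_eq_succ_of_ne_zero fun h0 => by simpa [h0] using Nat.find_spec hex
  have hlt := Nat.find_spec hex
  have hle := not_lt.1 (Nat.find_min hex (show y < Nat.find hex by omega))
  rw [hy, card_filter_lt_succ, card_filter_lt_succ] at hlt
  refine ⟨y, mem_sdiff.2 ⟨?_, ?_⟩, ?_⟩ <;> split_ifs at hlt <;> omega

lemma Fin.exists_mem_sdiff_card_filter_lt_eq {n : ℕ} {S A : Finset (Fin n)} (h : #A < #S) :
    ∃ i ∈ S \ A, #{j ∈ S | j < i} = #{j ∈ A | j < i} := by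
  obtain ⟨i, hi, heq⟩ := Finset.exists_mem_sdiff_card_filter_lt_eq
    (S := S.map Fin.valEmbedding) (A := A.map Fin.valEmbedding) (by simpa using h)
  rw [← Finset.map_sdiff, mem_map] at hi
  obtain ⟨i, hi, rfl⟩ := hi
  simp only [filter_map, card_map] at heq
  exact ⟨i, hi, heq⟩

lemma Finset.card_filter_add_card_compl_filter {α : Type*} [Fintype α] [DecidableEq α]
    (S : Finset α) (p : α → Prop) [DecidablePred p] :
    #{j ∈ S | p j} + #{j ∈ Sᶜ | p j} = #{j | p j} := by
  rw [← card_union_of_disjoint (disjoint_filter_filter disjoint_compl_right), ← filter_union,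
    union_compl]

lemma mem_permSet_indicator_iff {n : ℕ} (B : Finset (Fin n)) (ν : Fin n → ℕ) :
    ν ∈ permSet (fun i => if i ∈ B then 1 else 0) ↔
      ∃ A : Finset (Fin n), #A = #B ∧ ν = fun i => if i ∈ A then 1 else 0 := by
  simp only [permSet, mem_image, mem_univ, true_and]
  constructor
  · rintro ⟨σ, rfl⟩
    refine ⟨B.map σ.symm.toEmbedding, card_map _, funext fun i => ?_⟩
    simp [mem_map_equiv]
  · rintro ⟨A, hAB, rfl⟩
    obtain ⟨σ, hσ⟩ := Equiv.Perm.exists_map_finset_eq A B hAB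
    refine ⟨σ, funext fun i => ?_⟩
    simp [← hσ]

lemma mem_permSet_column_iff {n m : ℕ} (hm : m ≤ n) (ν : Fin n → ℕ) :
    ν ∈ permSet (fun i : Fin n => if (i : ℕ) < m then 1 else 0) ↔
      ∃ A : Finset (Fin n), #A = m ∧ ν = fun i => if i ∈ A then 1 else 0 := by
  have h := mem_permSet_indicator_iff {i : Fin n | i < m} ν
  simp only [mem_filter, mem_univ, true_and, Fin.card_filter_val_lt, min_eq_right hm] at h
  exact h

lemma indicator_support_le {n : ℕ} (ν : Fin n → ℕ) (i : Fin n) :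
    (if ν i ≠ 0 then 1 else 0) ≤ ν i := by
  split_ifs <;> omega

lemma card_support_le_wt {n : ℕ} (ν : Fin n → ℕ) : #{i | ν i ≠ 0} ≤ wt ν := by
  rw [card_filter]
  exact sum_le_sum fun i _ => indicator_support_le ν i

lemma eq_indicator_of_wt_le_card {n : ℕ} {ν : Fin n → ℕ} (h : wt ν ≤ #{i | ν i ≠ 0}) :
    ν = fun i => if ν i ≠ 0 then 1 else 0 := by
  have hle : ∀ i ∈ univ, (if ν i ≠ 0 then 1 else 0) ≤ ν i := fun i _ => indicator_support_le ν i
  rw [card_filter] at h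
  funext i
  exact ((sum_eq_sum_iff_of_le hle).1 (le_antisymm (sum_le_sum hle) h) i (mem_univ i)).symm

lemma card_support_lt_of_notMem_permSet_column {n m : ℕ} (hm : m ≤ n) {ν : Fin n → ℕ}
    (hwt : wt ν ≤ m) (hν : ν ∉ permSet (fun i : Fin n => if (i : ℕ) < m then 1 else 0)) :
    #{i | ν i ≠ 0} < m := by
  by_contra! hge
  have hcard : #{i | ν i ≠ 0} = m := le_antisymm ((card_support_le_wt ν).trans hwt) hge
  refine hν ((mem_permSet_column_iff hm ν).2 ⟨_, hcard, ?_⟩)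
  simpa using eq_indicator_of_wt_le_card (hwt.trans hge)

lemma indicator_eq_iff {n : ℕ} {μ : Fin n → ℕ} (hμ : ∀ i, μ i ≤ 1) (A : Finset (Fin n)) :
    (fun i => if i ∈ A then 1 else 0) = μ ↔ A = ({j | μ j = 1} : Finset (Fin n)) := by
  constructor
  · rintro rfl
    ext i
    simp
  · rintro rfl
    funext i
    have := hμ i
    simp only [mem_filter, mem_univ, true_and]
    split_ifs <;> omega

lemma toMono_indicator {n : ℕ} (A : Finset (Fin n)) :
    toMono (fun i => if i ∈ A then 1 else 0) = ∑ i ∈ A, Finsupp.single i 1 := by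
  ext j
  simp [toMono, Finsupp.finsetSum_apply, Finsupp.single_apply]

lemma wt_column {n m : ℕ} (hm : m ≤ n) :
    wt (fun i : Fin n => if (i : ℕ) < m then 1 else 0) = m := by
  rw [wt, sum_boole, Fin.card_filter_val_lt, min_eq_right hm]
  rfl

namespace MvPolynomial

lemma sum_single_one_injective {σ : Type*} :
    Function.Injective fun T : Finset σ => ∑ i ∈ T, Finsupp.single i 1 := fun T A h => by
  simpa [Finsupp.toMultiset_sum_single] using congrArg Finsupp.toMultiset h

variable {σ R : Type*} [CommRing R]

lemma prod_X_sub_C_eq_sum_powerset [DecidableEq σ] (S : Finset σ) (c : σ → R) :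
    ∏ i ∈ S, (X i - C (c i) : MvPolynomial σ R) =
      ∑ T ∈ S.powerset, monomial (∑ i ∈ T, Finsupp.single i 1) (∏ i ∈ S \ T, -c i) := by
  simp_rw [sub_eq_add_neg, ← C_neg, prod_add]
  refine sum_congr rfl fun T _ => ?_
  rw [monomial_sum_index, ← map_prod, mul_comm]
  rfl

lemma coeff_sum_single_prod_X_sub_C [DecidableEq σ] (S A : Finset σ) (c : σ → R) :
    coeff (∑ i ∈ A, Finsupp.single i 1) (∏ i ∈ S, (X i - C (c i))) =
      if A ⊆ S then ∏ i ∈ S \ A, -c i else 0 := by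
  simp_rw [prod_X_sub_C_eq_sum_powerset, coeff_sum, coeff_monomial,
    sum_single_one_injective.eq_iff, sum_ite_eq', mem_powerset]

lemma totalDegree_prod_X_sub_C_le (S : Finset σ) (c : σ → R) :
    (∏ i ∈ S, (X i - C (c i) : MvPolynomial σ R)).totalDegree ≤ #S := by
  refine (totalDegree_finsetProd _ _).trans ?_
  rw [card_eq_sum_ones]
  exact sum_le_sum fun i _ =>
    (totalDegree_sub_C_le _ _).trans ((totalDegree_monomial_le _ _).trans (by simp))

end MvPolynomial

lemma wt_le_totalDegree {n : ℕ} {R : Type*} [CommSemiring R] {p : MvPolynomial (Fin n) R}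
    {d : Fin n →₀ ℕ} (hd : d ∈ p.support) : wt d ≤ p.totalDegree :=
  (Finsupp.sum_fintype d (fun _ e => e) fun _ => rfl).symm.trans_le (le_totalDegree hd)

lemma sum_dotProduct_comp_perm_lt {ι σ : Type*} [Fintype ι] [Fintype σ] {v : ι → σ → ℤ}
    (hv : Function.Injective v) {π : Equiv.Perm ι} (hπ : π ≠ 1) :
    ∑ j, v (π j) ⬝ᵥ v j < ∑ j, v j ⬝ᵥ v j := by
  have hsq : ∑ j, (v (π j) - v j) ⬝ᵥ (v (π j) - v j) =
      2 * (∑ j, v j ⬝ᵥ v j - ∑ j, v (π j) ⬝ᵥ v j) := by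
    simp only [sub_dotProduct, dotProduct_sub, sum_sub_distrib, dotProduct_comm (v _) (v (π _)),
      Equiv.sum_comp π fun j => v j ⬝ᵥ v j]
    ring
  obtain ⟨j, hj⟩ : ∃ j, π j ≠ j := by
    by_contra! h
    exact hπ (Equiv.ext h)
  have hpos : 0 < ∑ j, (v (π j) - v j) ⬝ᵥ (v (π j) - v j) :=
    sum_pos' (fun j _ => sum_nonneg fun i _ => mul_self_nonneg _)
      ⟨j, mem_univ j, (sum_nonneg fun i _ => mul_self_nonneg _).lt_of_ne
        (Ne.symm (dotProduct_self_eq_zero.not.2 (sub_ne_zero.2 (hv.ne hj))))⟩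
  linarith

lemma Polynomial.det_C_mul_X_pow_ne_zero {R ι : Type*} [CommRing R] [IsDomain R] [Fintype ι]
    [DecidableEq ι] {a : ι → ι → R} {w : ι → ι → ℕ} (ha : ∀ j, a j j ≠ 0)
    (hw : ∀ π : Equiv.Perm ι, π ≠ 1 → ∑ j, w (π j) j < ∑ j, w j j) :
    (Matrix.of fun i j => Polynomial.C (a i j) * Polynomial.X ^ w i j).det ≠ 0 := by
  set M := Matrix.of fun i j => Polynomial.C (a i j) * Polynomial.X ^ w i j
  have hcoeff : M.det.coeff (∑ j, w j j) = ∏ j, a j j := by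
    rw [Matrix.det_apply, Polynomial.finsetSum_coeff, sum_eq_single 1]
    · simp only [M, Matrix.of_apply, Equiv.Perm.sign_one, one_smul, Equiv.Perm.one_apply]
      rw [prod_mul_distrib, ← map_prod, prod_pow_eq_pow_sum, Polynomial.coeff_C_mul_X_pow,
        if_pos rfl]
    · intro π _ hπ
      simp only [M, Matrix.of_apply]
      rw [Polynomial.coeff_smul, prod_mul_distrib, ← map_prod, prod_pow_eq_pow_sum,
        Polynomial.coeff_C_mul_X_pow, if_neg (hw π hπ).ne', smul_zero]
    · simp
  intro h
  rw [h, Polynomial.coeff_zero] at hcoeff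
  exact prod_ne_zero_iff.2 (fun j _ => ha j) hcoeff.symm

lemma RatFunc.det_X_pow_mul_C_pow_ne_zero {k σ : Type*} [Field k] [Fintype σ] [DecidableEq σ]
    (T : Finset (σ →₀ ℕ)) {c : (σ →₀ ℕ) → σ → k} (hc : ∀ d i, c d i ≠ 0) :
    (Matrix.of fun d e : T =>
      ∏ i, (RatFunc.X ^ (d : σ →₀ ℕ) i * RatFunc.C (c d i)) ^ (e : σ →₀ ℕ) i).det ≠ 0 := by
  have hentry : (Matrix.of fun d e : T =>
      ∏ i, (RatFunc.X ^ (d : σ →₀ ℕ) i * RatFunc.C (c d i)) ^ (e : σ →₀ ℕ) i) =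
      (algebraMap (Polynomial k) (RatFunc k)).mapMatrix (Matrix.of fun d e : T =>
        Polynomial.C (∏ i, c d i ^ (e : σ →₀ ℕ) i) *
          Polynomial.X ^ ∑ i, (d : σ →₀ ℕ) i * (e : σ →₀ ℕ) i) := by
    ext d e
    simp only [Matrix.of_apply, RingHom.mapMatrix_apply, Matrix.map_apply, map_mul, map_pow,
      map_prod, RatFunc.algebraMap_C, RatFunc.algebraMap_X, mul_pow, prod_mul_distrib, ← pow_mul,
      prod_pow_eq_pow_sum]
    exact mul_comm _ _
  rw [hentry, ← RingHom.map_det, map_ne_zero_iff _ (RatFunc.algebraMap_injective k)]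
  refine Polynomial.det_C_mul_X_pow_ne_zero
    (fun d => prod_ne_zero_iff.2 fun i _ => pow_ne_zero _ (hc d i)) fun π hπ => ?_
  have hv : Function.Injective fun (d : T) (i : σ) => ((d : σ →₀ ℕ) i : ℤ) :=
    fun d e h => Subtype.ext (Finsupp.ext fun i => Nat.cast_injective (congrFun h i))
  have h := sum_dotProduct_comp_perm_lt hv hπ
  simp only [dotProduct] at h
  exact_mod_cast h

lemma MvPolynomial.eq_zero_of_eval_eq_zero_of_det_ne_zero {L σ : Type*} [Field L] [Fintype σ]
    [DecidableEq σ] {H : MvPolynomial σ L} (x : (σ →₀ ℕ) → σ → L)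
    (hx : (Matrix.of fun d e : H.support => ∏ i, x d i ^ (e : σ →₀ ℕ) i).det ≠ 0)
    (h : ∀ d ∈ H.support, eval (x d) H = 0) : H = 0 := by
  by_contra hH
  have hv : (Matrix.of fun d e : H.support => ∏ i, x d i ^ (e : σ →₀ ℕ) i).mulVec
      (fun e => H.coeff e) = 0 := by
    funext d
    rw [Pi.zero_apply, ← h d d.2, eval_eq', Matrix.mulVec, dotProduct]
    simp only [Matrix.of_apply, mul_comm (∏ i, _)]
    exact sum_coe_sort H.support fun e => H.coeff e * ∏ i, x d i ^ e i
  obtain ⟨d, hd⟩ := support_nonempty.2 hH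
  exact mem_support_iff.1 hd (congrFun (Matrix.eq_zero_of_mulVec_eq_zero hx hv) ⟨d, hd⟩)

lemma tk_ne_zero : tk ≠ 0 := RatFunc.X_ne_zero

lemma mubar_eq {n : ℕ} (ν : Fin n → ℕ) :
    mubar ν = fun i => RatFunc.X ^ ν i * RatFunc.C (tk ^ (-(kStat ν i : ℤ))) := by
  funext i
  rw [mubar, tK, map_zpow₀]
  rfl

lemma eq_zero_of_eval_mubar_eq_zero {n : ℕ} {H : MvPolynomial (Fin n) KK}
    (h : ∀ d ∈ H.support, eval (mubar d) H = 0) : H = 0 := by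
  refine eq_zero_of_eval_eq_zero_of_det_ne_zero (fun d => mubar d) ?_ h
  simp only [mubar_eq]
  exact RatFunc.det_X_pow_mul_C_pow_ne_zero H.support (c := fun d i => tk ^ (-(kStat d i : ℤ)))
    fun d i => zpow_ne_zero _ tk_ne_zero

lemma kStat_of_eq_zero {n : ℕ} {ν : Fin n → ℕ} {i : Fin n} (hi : ν i = 0) :
    kStat ν i = #{j ∈ {j | ν j ≠ 0} | j < i} + (n - 1 - i) := by
  simp only [kStat, hi, zero_le, and_true, filter_lt_eq_Ioi, Fin.card_Ioi, filter_filter,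
    pos_iff_ne_zero]
  simp only [and_comm]

def singleColumnProd {n : ℕ} (S : Finset (Fin n)) : MvPolynomial (Fin n) KK :=
  ∏ i ∈ S, (X i - C (tK ^ ((#{j ∈ Sᶜ | j < i} : ℤ) - ((n : ℤ) - 1))))

lemma coeff_singleColumnProd {n : ℕ} {S A : Finset (Fin n)} (hA : #A = #S) :
    coeff (∑ i ∈ A, Finsupp.single i 1) (singleColumnProd S) = if A = S then 1 else 0 := by
  rw [singleColumnProd, coeff_sum_single_prod_X_sub_C]
  by_cases hAS : A = S
  · simp [hAS]
  · rw [if_neg hAS, if_neg fun hsub => hAS (eq_of_subset_of_card_le hsub hA.ge)]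

lemma coeff_toMono_singleColumnProd {n : ℕ} {μ : Fin n → ℕ} (hμ : ∀ i, μ i ≤ 1) {τ : Fin n → ℕ}
    (hτ : τ ∈ permSet fun i : Fin n => if (i : ℕ) < #{j | μ j = 1} then 1 else 0) :
    coeff (toMono τ) (singleColumnProd {j | μ j = 1}) = if τ = μ then 1 else 0 := by
  obtain ⟨A, hA, rfl⟩ :=
    (mem_permSet_column_iff ((card_le_univ _).trans_eq (Fintype.card_fin n)) τ).1 hτ
  rw [toMono_indicator, coeff_singleColumnProd hA]
  exact if_congr (indicator_eq_iff hμ A).symm rfl rfl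

lemma eval_mubar_singleColumnProd_eq_zero {n : ℕ} (S : Finset (Fin n)) {ν : Fin n → ℕ}
    (h : #{i | ν i ≠ 0} < #S) : eval (mubar ν) (singleColumnProd S) = 0 := by
  obtain ⟨i, hi, hbal⟩ := Fin.exists_mem_sdiff_card_filter_lt_eq h
  obtain ⟨hiS, hiA⟩ := mem_sdiff.1 hi
  have hνi : ν i = 0 := by simpa using hiA
  rw [singleColumnProd, eval_prod]
  refine prod_eq_zero hiS ?_
  rw [eval_sub, eval_X, eval_C, sub_eq_zero, mubar, hνi, pow_zero, one_mul, kStat_of_eq_zero hνi]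
  congr 1
  have hsplit := card_filter_add_card_compl_filter S (· < i)
  rw [filter_gt_eq_Iio, Fin.card_Iio] at hsplit
  have := i.2
  push_cast
  omega

theorem interpolation_asep_single_column_general (n : ℕ)
    (μ : Fin n → ℕ) (hμ : ∀ i, μ i ≤ 1)
    (F : MvPolynomial (Fin n) KK)
    (hF : IsIntASEP
      (fun i : Fin n =>
        if (i : ℕ) < (Finset.univ.filter (fun j => μ j = 1)).card then 1 else 0)
      μ F) :
    F = ∏ i ∈ Finset.univ.filter (fun j => μ j = 1),
      (X i - C (tK ^
        (((((Finset.univ.filter (fun j => μ j = 1))ᶜ).filter (fun j => j < i)).card : ℤ)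
          - ((n : ℤ) - 1)))) := by
  set S : Finset (Fin n) := {j | μ j = 1}
  change F = singleColumnProd S
  obtain ⟨hdeg, hcoeff, hvan⟩ := hF
  have hSn : #S ≤ n := (card_le_univ S).trans_eq (Fintype.card_fin n)
  rw [wt_column hSn] at hdeg hvan
  refine sub_eq_zero.1 (eq_zero_of_eval_mubar_eq_zero fun d hd => ?_)
  have hwt : wt d ≤ #S := (wt_le_totalDegree hd).trans ((totalDegree_sub _ _).trans
    (max_le hdeg (totalDegree_prod_X_sub_C_le _ _)))
  by_cases hperm : ⇑d ∈ permSet fun i : Fin n => if (i : ℕ) < #S then 1 else 0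
  · refine absurd ?_ (mem_support_iff.1 hd)
    have hmono : toMono d = d := Finsupp.equivFunOnFinite_symm_coe d
    rw [coeff_sub, ← hmono, hcoeff _ hperm, coeff_toMono_singleColumnProd hμ hperm, sub_self]
  · rw [map_sub, hvan _ hwt hperm, eval_mubar_singleColumnProd_eq_zero S
      (card_support_lt_of_notMem_permSet_column hSn hwt hperm), sub_zero]

/-- Product formula for single-column interpolation ASEP polynomials. -/
theorem interpolation_asep_single_column (n : ℕ) (hn : 0 < n)
    (μ : Fin n → ℕ) (hμ : ∀ i, μ i ≤ 1)
    (F : MvPolynomial (Fin n) KK)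
    (hF : IsIntASEP
      (fun i : Fin n =>
        if (i : ℕ) < (Finset.univ.filter (fun j => μ j = 1)).card then 1 else 0)
      μ F) :
    F = ∏ i ∈ Finset.univ.filter (fun j => μ j = 1),
      (X i - C (tK ^
        (((((Finset.univ.filter (fun j => μ j = 1))ᶜ).filter (fun j => j < i)).card : ℤ)
          - ((n : ℤ) - 1)))) :=
  interpolation_asep_single_column_general n μ hμ F hF
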